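/- For any J ∈ ℝ^𝒳 and any initial distribution η on 𝒳, with s = (J − TJ)^+, one has η^⊤(J − J*) ≤ (1/(1−α)) ν(η,J)^⊤ Δ* s, where Δ* = (I − α P_{μ*})^{−1}. -/

import Mathlib

/-! Write `d = J - J*` and `Δ* = ∑ₖ (α P_{μ*})^k`. Because `J*` is the fixed point of `T_{μ*}`,
`(I - α P_{μ*}) d = J - T_{μ*} J ≤ J - T J ≤ s`, and as `Δ*` inverts `I - α P_{μ*}` and has
nonnegative entries, `d ≤ Δ* s`. The Neumann series `Δ_{μ_J}` dominates the identity on the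
nonnegative vector `Δ* s`, so `η^⊤ d ≤ η^⊤ Δ_{μ_J} Δ* s`, and `η^⊤ Δ_{μ_J} = ν(η, J)^⊤ / (1 - α)`. -/

open Finset Matrix

noncomputable section

/-- The Bellman operator. -/
def bellmanT {X A : Type*} [Fintype X] [Fintype A] [Nonempty A]
    (g : X → A → ℝ) (P : A → X → X → ℝ) (α : ℝ) (J : X → ℝ) : X → ℝ :=
  fun x => Finset.univ.inf' Finset.univ_nonempty fun a => g x a + α * ∑ x', P a x x' * J x'

/-- The Bellman operator of a stationary policy. -/
def polT {X A : Type*} [Fintype X]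
    (g : X → A → ℝ) (P : A → X → X → ℝ) (α : ℝ) (μ : X → A) (J : X → ℝ) : X → ℝ :=
  fun x => g x (μ x) + α * ∑ x', P (μ x) x x' * J x'

/-- Transition matrix of a stationary policy. -/
def polMat {X A : Type*} (P : A → X → X → ℝ) (μ : X → A) : Matrix X X ℝ :=
  Matrix.of fun x x' => P (μ x) x x'

/-- Δ_μ = Σ_k (α P_μ)^k = (I - α P_μ)⁻¹. -/
def deltaMat {X A : Type*} [Fintype X] [DecidableEq X]
    (P : A → X → X → ℝ) (α : ℝ) (μ : X → A) : Matrix X X ℝ :=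
  ∑' k : ℕ, (α • polMat P μ) ^ k

/-- π_{μ,ν} = (1-α) ν^⊤ (I - α P_μ)⁻¹. -/
def piDist {X A : Type*} [Fintype X] [DecidableEq X]
    (P : A → X → X → ℝ) (α : ℝ) (μ : X → A) (ν : X → ℝ) : X → ℝ :=
  fun x => (1 - α) * ∑ x0, ν x0 * deltaMat P α μ x0 x

/-- Cost-to-go of policy μ: Σ_t α^t P_μ^t g_μ. -/
def Jpol {X A : Type*} [Fintype X] [DecidableEq X]
    (g : X → A → ℝ) (P : A → X → X → ℝ) (α : ℝ) (μ : X → A) : X → ℝ :=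
  fun x => ∑' t : ℕ, α ^ t * (((polMat P μ) ^ t) *ᵥ (fun y => g y (μ y))) x

/-- Linear combination of basis functions. -/
def phiR {X : Type*} {K : ℕ} (Φ : X → Fin K → ℝ) (r : Fin K → ℝ) : X → ℝ :=
  fun x => ∑ i, Φ x i * r i

/-- ν-weighted 1-norm. -/
def wnorm1 {X : Type*} [Fintype X] (ν J : X → ℝ) : ℝ := ∑ x, ν x * |J x|

/-- Max norm. -/
def supNorm {X : Type*} [Fintype X] [Nonempty X] (J : X → ℝ) : ℝ :=
  Finset.univ.sup' Finset.univ_nonempty fun x => |J x|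

/-- ψ-weighted max norm ‖J‖_{∞,1/ψ}. -/
def wsupNorm {X : Type*} [Fintype X] [Nonempty X] (ψ J : X → ℝ) : ℝ :=
  Finset.univ.sup' Finset.univ_nonempty fun x => |J x| / ψ x

/-- β(ψ) = max_{x,a} (Σ_{x'} P_a(x,x') ψ(x')) / ψ(x). -/
def betaPsi {X A : Type*} [Fintype X] [Nonempty X] [Fintype A] [Nonempty A]
    (P : A → X → X → ℝ) (ψ : X → ℝ) : ℝ :=
  Finset.univ.sup' Finset.univ_nonempty fun p : X × A => (∑ x', P p.2 p.1 x' * ψ x') / ψ p.1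

/-- Feasible values of the LP defining ℓ(r,θ). -/
def ellSet {X A : Type*} [Fintype X] [Fintype A] [Nonempty A] {K : ℕ}
    (g : X → A → ℝ) (P : A → X → X → ℝ) (α : ℝ) (π : X → ℝ)
    (Φ : X → Fin K → ℝ) (r : Fin K → ℝ) (θ : ℝ) : Set ℝ :=
  {v | ∃ (s : X → ℝ) (γ : ℝ), v = γ / (1 - α) ∧
    (∀ x, phiR Φ r x - bellmanT g P α (phiR Φ r) x ≤ s x + γ) ∧
    (∑ x, π x * s x ≤ θ) ∧ (∀ x, 0 ≤ s x)}

/-- ℓ(r,θ): optimal value of the LP (3.2). -/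
def ellVal {X A : Type*} [Fintype X] [Fintype A] [Nonempty A] {K : ℕ}
    (g : X → A → ℝ) (P : A → X → X → ℝ) (α : ℝ) (π : X → ℝ)
    (Φ : X → Fin K → ℝ) (r : Fin K → ℝ) (θ : ℝ) : ℝ :=
  sInf (ellSet g P α π Φ r θ)

namespace Matrix

section OrderedSemiring

variable {m n R : Type*} [Fintype n] [Semiring R] [PartialOrder R] [IsOrderedRing R]
  {N : Matrix m n R}

lemma mulVec_le_mulVec_of_nonneg (hN : ∀ i j, 0 ≤ N i j) {u v : n → R} (huv : u ≤ v) :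
    N *ᵥ u ≤ N *ᵥ v :=
  fun i => dotProduct_le_dotProduct_of_nonneg_left huv (hN i)

lemma mulVec_nonneg_of_nonneg (hN : ∀ i j, 0 ≤ N i j) {v : n → R} (hv : 0 ≤ v) :
    0 ≤ N *ᵥ v := by
  simpa using mulVec_le_mulVec_of_nonneg hN hv

end OrderedSemiring

variable {n : Type*} [Fintype n] [DecidableEq n] {M : Matrix n n ℝ} {α : ℝ}

lemma smul_pow_apply_nonneg (hM : M ∈ rowStochastic ℝ n) (hα : 0 ≤ α) (k : ℕ) (i j : n) :
    0 ≤ ((α • M) ^ k) i j := by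
  rw [smul_pow, smul_apply, smul_eq_mul]
  exact mul_nonneg (pow_nonneg hα k) (nonneg_of_mem_rowStochastic (pow_mem hM k))

lemma smul_pow_apply_le (hM : M ∈ rowStochastic ℝ n) (hα : 0 ≤ α) (k : ℕ) (i j : n) :
    ((α • M) ^ k) i j ≤ α ^ k := by
  rw [smul_pow, smul_apply, smul_eq_mul]
  exact mul_le_of_le_one_right (pow_nonneg hα k) (le_one_of_mem_rowStochastic (pow_mem hM k))

lemma summable_smul_pow (hM : M ∈ rowStochastic ℝ n) (hα0 : 0 ≤ α) (hα1 : α < 1) :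
    Summable fun k : ℕ => (α • M) ^ k :=
  Pi.summable.2 fun i => Pi.summable.2 fun j =>
    (summable_geometric_of_lt_one hα0 hα1).of_nonneg_of_le
      (fun k => smul_pow_apply_nonneg hM hα0 k i j) (fun k => smul_pow_apply_le hM hα0 k i j)

lemma tsum_smul_pow_nonneg (hM : M ∈ rowStochastic ℝ n) (hα0 : 0 ≤ α) (hα1 : α < 1)
    (i j : n) : 0 ≤ (∑' k : ℕ, (α • M) ^ k) i j :=
  (Pi.hasSum.1 (Pi.hasSum.1 (summable_smul_pow hM hα0 hα1).hasSum i) j).nonneg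
    fun k => smul_pow_apply_nonneg hM hα0 k i j

-- `∑ (α M)^k = 1 + α M ∑ (α M)^k`, and the second summand maps nonnegative vectors to
-- nonnegative vectors.
lemma le_tsum_smul_pow_mulVec (hM : M ∈ rowStochastic ℝ n) (hα0 : 0 ≤ α) (hα1 : α < 1)
    {w : n → ℝ} (hw : 0 ≤ w) : w ≤ (∑' k : ℕ, (α • M) ^ k) *ᵥ w := by
  have hΔ := (summable_smul_pow hM hα0 hα1).one_sub_mul_tsum_pow
  rw [sub_mul, one_mul, sub_eq_iff_eq_add] at hΔ
  set Δ := ∑' k : ℕ, (α • M) ^ k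
  have hrest : 0 ≤ α • (M *ᵥ (Δ *ᵥ w)) :=
    smul_nonneg hα0 (nonneg_mulVec_of_mem_rowStochastic hM
      (mulVec_nonneg_of_nonneg (tsum_smul_pow_nonneg hM hα0 hα1) hw))
  calc w ≤ w + α • (M *ᵥ (Δ *ᵥ w)) := le_add_of_nonneg_right hrest
    _ = Δ *ᵥ w := by
      conv_rhs => rw [hΔ]
      rw [add_mulVec, one_mulVec, smul_mul_assoc, smul_mulVec, mulVec_mulVec]

lemma le_tsum_smul_pow_mulVec_of_sub_le (hM : M ∈ rowStochastic ℝ n) (hα0 : 0 ≤ α)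
    (hα1 : α < 1) {d s : n → ℝ} (hds : d - α • (M *ᵥ d) ≤ s) :
    d ≤ (∑' k : ℕ, (α • M) ^ k) *ᵥ s := by
  have hinv := (summable_smul_pow hM hα0 hα1).tsum_pow_mul_one_sub
  calc d = ((∑' k : ℕ, (α • M) ^ k) * (1 - α • M)) *ᵥ d := by rw [hinv, one_mulVec]
    _ = (∑' k : ℕ, (α • M) ^ k) *ᵥ (d - α • (M *ᵥ d)) := by
        rw [← mulVec_mulVec, sub_mulVec, one_mulVec, smul_mulVec]
    _ ≤ (∑' k : ℕ, (α • M) ^ k) *ᵥ s :=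
        mulVec_le_mulVec_of_nonneg (tsum_smul_pow_nonneg hM hα0 hα1) hds

end Matrix

section MDP

variable {X A : Type*} [Fintype X] {g : X → A → ℝ} {P : A → X → X → ℝ} {α : ℝ}

lemma polMat_mem_rowStochastic [DecidableEq X] (hP0 : ∀ a x x', 0 ≤ P a x x')
    (hP1 : ∀ a x, ∑ x', P a x x' = 1) (μ : X → A) : polMat P μ ∈ rowStochastic ℝ X :=
  mem_rowStochastic_iff_sum.2 ⟨fun x x' => hP0 (μ x) x x', fun x => hP1 (μ x) x⟩

lemma bellmanT_le_polT [Fintype A] [Nonempty A] (μ : X → A) (J : X → ℝ) :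
    bellmanT g P α J ≤ polT g P α μ J :=
  fun x => Finset.inf'_le _ (Finset.mem_univ (μ x))

lemma sub_sub_smul_polMat_mulVec {μ : X → A} {J' : X → ℝ} (hJ' : polT g P α μ J' = J')
    (J : X → ℝ) :
    (J - J') - α • (polMat P μ *ᵥ (J - J')) = J - polT g P α μ J := by
  ext x
  have hx := congrFun hJ' x
  simp only [polT] at hx
  simp only [polT, Pi.sub_apply, Pi.smul_apply, smul_eq_mul, mulVec, dotProduct, polMat,
    of_apply, mul_sub, Finset.sum_sub_distrib]
  linear_combination hx

lemma one_div_mul_sum_piDist_mul [DecidableEq X] (hα : α ≠ 1) (μ : X → A) (η w : X → ℝ) :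
    1 / (1 - α) * ∑ x, piDist P α μ η x * w x = η ⬝ᵥ (deltaMat P α μ *ᵥ w) := by
  have h1α : 1 - α ≠ 0 := sub_ne_zero.2 hα.symm
  rw [dotProduct_mulVec]
  simp only [piDist, dotProduct, vecMul, mul_assoc, ← Finset.mul_sum]
  field_simp

end MDP

theorem J_minus_Jstar_bound_general
    {X A : Type*} [Fintype X] [Fintype A] [Nonempty A] [DecidableEq X]
    (g : X → A → ℝ) (P : A → X → X → ℝ) (α : ℝ)
    (hα0 : 0 < α) (hα1 : α < 1)
    (hP0 : ∀ a x x', 0 ≤ P a x x') (hP1 : ∀ a x, ∑ x', P a x x' = 1)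
    (Jstar : X → ℝ) (hJstar : bellmanT g P α Jstar = Jstar)
    (μs : X → A) (hμs : polT g P α μs Jstar = bellmanT g P α Jstar)
    (J : X → ℝ) (μJ : X → A)
    (η : X → ℝ) (hη0 : ∀ x, 0 ≤ η x) :
    ∑ x, η x * (J x - Jstar x) ≤
      (1 / (1 - α)) * ∑ x, piDist P α μJ η x *
        (deltaMat P α μs *ᵥ (fun y => max (J y - bellmanT g P α J y) 0)) x := by
  set s : X → ℝ := fun y => max (J y - bellmanT g P α J y) 0
  have hstoch := polMat_mem_rowStochastic hP0 hP1
  have hJ : J - Jstar ≤ deltaMat P α μs *ᵥ s := by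
    refine Matrix.le_tsum_smul_pow_mulVec_of_sub_le (hstoch μs) hα0.le hα1 ?_
    rw [sub_sub_smul_polMat_mulVec (hμs.trans hJstar)]
    exact fun x => (sub_le_sub_left (bellmanT_le_polT μs J x) _).trans (le_max_left _ _)
  have hΔ : deltaMat P α μs *ᵥ s ≤ deltaMat P α μJ *ᵥ (deltaMat P α μs *ᵥ s) :=
    Matrix.le_tsum_smul_pow_mulVec (hstoch μJ) hα0.le hα1 <|
      Matrix.mulVec_nonneg_of_nonneg (Matrix.tsum_smul_pow_nonneg (hstoch μs) hα0.le hα1)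
        fun y => le_max_right _ _
  rw [one_div_mul_sum_piDist_mul hα1.ne]
  exact dotProduct_le_dotProduct_of_nonneg_left (hJ.trans hΔ) hη0

/-- with s = (J - TJ)^+, η^⊤(J - J*) ≤ (1/(1-α)) ν(η,J)^⊤ Δ* s. -/
theorem J_minus_Jstar_bound
    {X A : Type*} [Fintype X] [Nonempty X] [Fintype A] [Nonempty A] [DecidableEq X]
    (g : X → A → ℝ) (P : A → X → X → ℝ) (α : ℝ)
    (hα0 : 0 < α) (hα1 : α < 1)
    (hP0 : ∀ a x x', 0 ≤ P a x x') (hP1 : ∀ a x, ∑ x', P a x x' = 1)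
    (Jstar : X → ℝ) (hJstar : bellmanT g P α Jstar = Jstar)
    (μs : X → A) (hμs : polT g P α μs Jstar = bellmanT g P α Jstar)
    (J : X → ℝ) (μJ : X → A) (hμJ : polT g P α μJ J = bellmanT g P α J)
    (η : X → ℝ) (hη0 : ∀ x, 0 ≤ η x) (hη1 : ∑ x, η x = 1) :
    ∑ x, η x * (J x - Jstar x) ≤
      (1 / (1 - α)) * ∑ x, piDist P α μJ η x *
        (deltaMat P α μs *ᵥ (fun y => max (J y - bellmanT g P α J y) 0)) x :=
  J_minus_Jstar_bound_general g P α hα0 hα1 hP0 hP1 Jstar hJstar μs hμs J μJ η hη0
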